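/- Let K be a closed bounded matrix convex set over ℝ^g (self-adjoint tuples) containing 0, and let θ = (θ_n) be a self-adjoint matrix affine map with θ_n : K(n) → B(H_n). Then there exist real numbers α_0, α_1, ..., α_g such that θ_n(Y) = α_0 I_n − Σ_{i=1}^g α_i Y_i for all Y ∈ K(n) and all n. -/

import Mathlib

/-!
Weighting with the scalars `√t • 1` turns two-term matrix convex combinations into ordinary
ones, so every `K n` is convex and every `θ n` is affine on it. An affine map on a convex set
containing `0` is its value at `0` plus a linear map: the cone over its graph is closed under
addition, so the span of the graph is itself a graph. Apply this to `θ 1` on `K 1`. For `Y ∈ K n`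
and a unit vector `v`, compressing along the isometry `|v⟩⟨e₁| : ℂ¹ → ℂⁿ` gives the scalar tuple
`(⟪v, Yᵢ v⟫)ᵢ ∈ K 1`, on which `θ 1` takes the value `⟪v, θ n Y v⟫`. Hence `θ n Y` and the pencil
have the same quadratic form on unit vectors, and a complex operator is determined by it.
-/

open ContinuousLinearMap InnerProductSpace

theorem Submodule.exists_linearMap_apply_fst_eq_snd {K E F : Type*} [DivisionRing K]
    [AddCommGroup E] [Module K E] [AddCommGroup F] [Module K F] (W : Submodule K (E × F))
    (hW : ∀ p ∈ W, p.1 = 0 → p.2 = 0) : ∃ L : E →ₗ[K] F, ∀ p ∈ W, L p.1 = p.2 := by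
  obtain ⟨L, hL⟩ := W.toLinearPMap.toFun.exists_extend
  refine ⟨L, fun p hp => ?_⟩
  rw [← W.toLinearPMap_graph_eq hW, LinearPMap.mem_graph_iff] at hp
  obtain ⟨x, hx1, hx2⟩ := hp
  rw [← hx1, ← hx2]
  exact LinearMap.congr_fun hL x

section Affine

variable {𝕜 M N : Type*} [Field 𝕜] [LinearOrder 𝕜]
  [AddCommGroup M] [Module 𝕜 M] [AddCommGroup N] [Module 𝕜 N] {S : Set M} {ψ : M → N}

variable (𝕜) in
def AffineOn (S : Set M) (ψ : M → N) : Prop :=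
  ∀ y ∈ S, ∀ z ∈ S, ∀ a b : 𝕜, 0 ≤ a → 0 ≤ b → a + b = 1 → ψ (a • y + b • z) = a • ψ y + b • ψ z

namespace AffineOn

theorem sub_const (hψ : AffineOn 𝕜 S ψ) (c : N) : AffineOn 𝕜 S (fun y => ψ y - c) := by
  intro y hy z hz a b ha hb hab
  dsimp only
  rw [hψ y hy z hz a b ha hb hab, smul_sub, smul_sub]
  nth_rw 1 [← one_smul 𝕜 c, ← hab, add_smul]
  abel

variable [IsStrictOrderedRing 𝕜]

theorem map_smul (hψ : AffineOn 𝕜 S ψ) (h0 : (0 : M) ∈ S) (hψ0 : ψ 0 = 0)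
    {y : M} (hy : y ∈ S) {t : 𝕜} (ht0 : 0 ≤ t) (ht1 : t ≤ 1) : ψ (t • y) = t • ψ y := by
  simpa [hψ0] using hψ y hy 0 h0 t (1 - t) ht0 (sub_nonneg.2 ht1) (by ring)

theorem smul_map_eq_of_smul_eq (hψ : AffineOn 𝕜 S ψ) (h0 : (0 : M) ∈ S) (hψ0 : ψ 0 = 0)
    {y z : M} (hy : y ∈ S) (hz : z ∈ S) {t s : 𝕜} (ht : 0 ≤ t) (hs : 0 ≤ s)
    (h : t • y = s • z) : t • ψ y = s • ψ z := by
  wlog hst : s ≤ t generalizing y z t s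
  · exact (this hz hy hs ht h.symm (le_of_not_ge hst)).symm
  rcases ht.eq_or_lt with rfl | ht
  · rw [le_antisymm hst hs, zero_smul, zero_smul]
  have hyz : y = (s / t) • z := by
    rw [div_eq_inv_mul, mul_smul, ← h, smul_smul, inv_mul_cancel₀ ht.ne', one_smul]
  rw [hyz, hψ.map_smul h0 hψ0 hz (div_nonneg hs ht.le) ((div_le_one ht).2 hst), smul_smul,
    mul_div_cancel₀ _ ht.ne']

theorem exists_smul_graph_eq_add (hψ : AffineOn 𝕜 S ψ) (hS : Convex 𝕜 S) (h0 : (0 : M) ∈ S)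
    {y z : M} (hy : y ∈ S) (hz : z ∈ S) {t s : 𝕜} (ht : 0 ≤ t) (hs : 0 ≤ s) :
    ∃ r : 𝕜, 0 ≤ r ∧ ∃ w ∈ S, t • (y, ψ y) + s • (z, ψ z) = r • (w, ψ w) := by
  rcases (add_nonneg ht hs).eq_or_lt with hts | hts
  · obtain ⟨rfl, rfl⟩ := (add_eq_zero_iff_of_nonneg ht hs).1 hts.symm
    exact ⟨0, le_rfl, 0, h0, by simp⟩
  have ha : 0 ≤ t / (t + s) := div_nonneg ht hts.le
  have hb : 0 ≤ s / (t + s) := div_nonneg hs hts.le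
  have hab : t / (t + s) + s / (t + s) = 1 := by rw [← add_div, div_self hts.ne']
  refine ⟨t + s, hts.le, _, hS hy hz ha hb hab, ?_⟩
  rw [hψ y hy z hz _ _ ha hb hab]
  ext <;> simp [smul_add, smul_smul, mul_div_cancel₀ _ hts.ne']

theorem exists_of_mem_span_graph (hψ : AffineOn 𝕜 S ψ) (hS : Convex 𝕜 S) (h0 : (0 : M) ∈ S)
    {p : M × N} (hp : p ∈ Submodule.span 𝕜 ((fun y => (y, ψ y)) '' S)) :
    ∃ t s : 𝕜, 0 ≤ t ∧ 0 ≤ s ∧ ∃ y ∈ S, ∃ z ∈ S, p = t • (y, ψ y) - s • (z, ψ z) := by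
  induction hp using Submodule.span_induction with
  | mem p hp =>
    obtain ⟨y, hy, rfl⟩ := hp
    exact ⟨1, 0, zero_le_one, le_rfl, y, hy, y, hy, by simp⟩
  | zero => exact ⟨0, 0, le_rfl, le_rfl, 0, h0, 0, h0, by simp⟩
  | add p q _ _ hp hq =>
    obtain ⟨t, s, ht, hs, y, hy, z, hz, rfl⟩ := hp
    obtain ⟨t', s', ht', hs', y', hy', z', hz', rfl⟩ := hq
    obtain ⟨r, hr, w, hw, hrw⟩ := hψ.exists_smul_graph_eq_add hS h0 hy hy' ht ht'
    obtain ⟨r', hr', w', hw', hrw'⟩ := hψ.exists_smul_graph_eq_add hS h0 hz hz' hs hs'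
    exact ⟨r, r', hr, hr', w, hw, w', hw', by rw [← hrw, ← hrw']; abel⟩
  | smul c p _ hp =>
    obtain ⟨t, s, ht, hs, y, hy, z, hz, rfl⟩ := hp
    rcases le_total 0 c with hc | hc
    · exact ⟨c * t, c * s, mul_nonneg hc ht, mul_nonneg hc hs, y, hy, z, hz,
        by rw [smul_sub, smul_smul, smul_smul]⟩
    · refine ⟨-c * s, -c * t, mul_nonneg (neg_nonneg.2 hc) hs, mul_nonneg (neg_nonneg.2 hc) ht,
        z, hz, y, hy, ?_⟩
      rw [smul_sub, mul_smul, mul_smul, neg_smul, neg_smul]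
      abel

theorem exists_linearMap_eq (hψ : AffineOn 𝕜 S ψ) (hS : Convex 𝕜 S) (h0 : (0 : M) ∈ S) :
    ∃ L : M →ₗ[𝕜] N, ∀ y ∈ S, ψ y = ψ 0 + L y := by
  set φ := fun y => ψ y - ψ 0
  have hφ : AffineOn 𝕜 S φ := hψ.sub_const (ψ 0)
  have hφ0 : φ 0 = 0 := sub_self _
  obtain ⟨L, hL⟩ :=
    (Submodule.span 𝕜 ((fun y => (y, φ y)) '' S)).exists_linearMap_apply_fst_eq_snd (by
      intro p hp hp1
      obtain ⟨t, s, ht, hs, y, hy, z, hz, rfl⟩ := hφ.exists_of_mem_span_graph hS h0 hp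
      simp only [Prod.fst_sub, Prod.snd_sub, Prod.smul_fst, Prod.smul_snd, sub_eq_zero] at hp1 ⊢
      exact hφ.smul_map_eq_of_smul_eq h0 hφ0 hy hz ht hs hp1)
  refine ⟨L, fun y hy => ?_⟩
  rw [hL (y, φ y) (Submodule.subset_span ⟨y, hy, rfl⟩), add_sub_cancel]

end AffineOn

end Affine

local notation "⟪" x ", " y "⟫" => @inner ℂ _ _ x y

theorem ContinuousLinearMap.ext_inner_self_of_norm_eq_one {E : Type*} [NormedAddCommGroup E]
    [InnerProductSpace ℂ E] {A B : E →L[ℂ] E} (h : ∀ v, ‖v‖ = 1 → ⟪v, A v⟫ = ⟪v, B v⟫) :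
    A = B := by
  refine coe_injective ((ext_inner_map _ _).1 fun x => ?_)
  rcases eq_or_ne x 0 with rfl | hx
  · simp
  have hx' : (‖x‖ : ℂ) ≠ 0 := by exact_mod_cast norm_ne_zero_iff.2 hx
  obtain ⟨v, hv, hxv⟩ : ∃ v : E, ‖v‖ = 1 ∧ x = (‖x‖ : ℂ) • v :=
    ⟨(‖x‖ : ℂ)⁻¹ • x, by simp [norm_smul, hx], by rw [smul_smul, mul_inv_cancel₀ hx', one_smul]⟩
  rw [hxv]
  simp only [coe_coe, map_smul, inner_smul_left, inner_smul_right]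
  rw [← inner_conj_symm (A v), h v hv, inner_conj_symm]

theorem IsSelfAdjoint.coe_re_inner_self_apply {𝕜 E : Type*} [RCLike 𝕜] [NormedAddCommGroup E]
    [InnerProductSpace 𝕜 E] [CompleteSpace E] {T : E →L[𝕜] E} (hT : IsSelfAdjoint T) (x : E) :
    (RCLike.re (inner 𝕜 x (T x)) : 𝕜) = inner 𝕜 x (T x) :=
  hT.isSymmetric.coe_re_inner_self_apply x

theorem InnerProductSpace.adjoint_rankOne_comp_comp_rankOne {E F : Type*} [NormedAddCommGroup E]
    [InnerProductSpace ℂ E] [CompleteSpace E] [NormedAddCommGroup F] [InnerProductSpace ℂ F]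
    [CompleteSpace F] (v : F) (e : E) (A : F →L[ℂ] F) :
    adjoint (rankOne ℂ v e) ∘L (A ∘L rankOne ℂ v e) = ⟪v, A v⟫ • rankOne ℂ e e := by
  rw [adjoint_rankOne, comp_rankOne, rankOne_comp_rankOne]

theorem ContinuousLinearMap.adjoint_smul_one_comp_comp {E : Type*} [NormedAddCommGroup E]
    [InnerProductSpace ℂ E] [CompleteSpace E] (c : ℝ) (A : E →L[ℂ] E) :
    adjoint (c • (1 : E →L[ℂ] E)) ∘L (A ∘L (c • 1)) = c ^ 2 • A := by
  rw [← Complex.coe_smul, ← star_eq_adjoint, star_smul, star_one, Complex.star_def,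
    Complex.conj_ofReal]
  ext x
  simp [smul_smul, sq]

section SqrtWeights

variable {E : Type*} [NormedAddCommGroup E] [InnerProductSpace ℂ E] [CompleteSpace E]
  {a b : ℝ}

theorem sum_adjoint_sqrt_smul_one_comp_comp (ha : 0 ≤ a) (hb : 0 ≤ b) (A : Fin 2 → E →L[ℂ] E) :
    ∑ ℓ, adjoint (![√a • 1, √b • 1] ℓ) ∘L (A ℓ ∘L ![√a • 1, √b • 1] ℓ) = a • A 0 + b • A 1 := by
  simp only [Fin.sum_univ_two, Matrix.cons_val_zero, Matrix.cons_val_one]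
  rw [adjoint_smul_one_comp_comp, adjoint_smul_one_comp_comp, Real.sq_sqrt ha, Real.sq_sqrt hb]

theorem sum_adjoint_sqrt_smul_one_comp_eq_one (ha : 0 ≤ a) (hb : 0 ≤ b) (hab : a + b = 1) :
    ∑ ℓ, adjoint (![√a • (1 : E →L[ℂ] E), √b • 1] ℓ) ∘L ![√a • (1 : E →L[ℂ] E), √b • 1] ℓ =
      1 := by
  have := sum_adjoint_sqrt_smul_one_comp_comp (E := E) ha hb fun _ => 1
  simpa only [one_def, id_comp, ← add_smul, hab, one_smul] using this

end SqrtWeights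

local notation "𝓗" n:max => EuclideanSpace ℂ (Fin n)
local notation "e₁" => (EuclideanSpace.single 0 1 : 𝓗 1)

theorem EuclideanSpace.rankOne_single_zero_eq_one : rankOne ℂ e₁ e₁ = 1 := by
  simpa [one_def] using (EuclideanSpace.basisFun (Fin 1) ℂ).sum_rankOne_eq_id

def IsMatrixConvex {g : ℕ} (K : ∀ n : ℕ, Set (Fin g → (𝓗 n →L[ℂ] 𝓗 n))) : Prop :=
  ∀ (n k : ℕ) (nn : Fin k → ℕ) (Z : ∀ ℓ : Fin k, Fin g → (𝓗 (nn ℓ) →L[ℂ] 𝓗 (nn ℓ)))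
    (V : ∀ ℓ : Fin k, 𝓗 n →L[ℂ] 𝓗 (nn ℓ)),
    (∀ ℓ, Z ℓ ∈ K (nn ℓ)) → ∑ ℓ, adjoint (V ℓ) ∘L V ℓ = 1 →
      (fun i => ∑ ℓ, adjoint (V ℓ) ∘L (Z ℓ i ∘L V ℓ)) ∈ K n

def IsMatrixAffineOn {g : ℕ} (K : ∀ n : ℕ, Set (Fin g → (𝓗 n →L[ℂ] 𝓗 n)))
    (θ : ∀ n : ℕ, (Fin g → (𝓗 n →L[ℂ] 𝓗 n)) → (𝓗 n →L[ℂ] 𝓗 n)) : Prop :=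
  ∀ (n k : ℕ) (nn : Fin k → ℕ) (Z : ∀ ℓ : Fin k, Fin g → (𝓗 (nn ℓ) →L[ℂ] 𝓗 (nn ℓ)))
    (V : ∀ ℓ : Fin k, 𝓗 n →L[ℂ] 𝓗 (nn ℓ)),
    (∀ ℓ, Z ℓ ∈ K (nn ℓ)) → ∑ ℓ, adjoint (V ℓ) ∘L V ℓ = 1 →
      θ n (fun i => ∑ ℓ, adjoint (V ℓ) ∘L (Z ℓ i ∘L V ℓ)) =
        ∑ ℓ, adjoint (V ℓ) ∘L (θ (nn ℓ) (Z ℓ) ∘L V ℓ)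

section MatrixConvex

variable {g : ℕ} {K : ∀ n : ℕ, Set (Fin g → (𝓗 n →L[ℂ] 𝓗 n))}
  {θ : ∀ n : ℕ, (Fin g → (𝓗 n →L[ℂ] 𝓗 n)) → (𝓗 n →L[ℂ] 𝓗 n)} {n : ℕ}
  {Y : Fin g → (𝓗 n →L[ℂ] 𝓗 n)} {v : 𝓗 n}

theorem sum_adjoint_rankOne_comp_rankOne (hv : ‖v‖ = 1) :
    ∑ _ℓ : Fin 1, adjoint (rankOne ℂ v e₁) ∘L rankOne ℂ v e₁ = 1 := by
  simpa [hv, one_def, EuclideanSpace.rankOne_single_zero_eq_one] using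
    adjoint_rankOne_comp_comp_rankOne v e₁ 1

theorem IsMatrixConvex.compress_mem (hK : IsMatrixConvex K) (hY : Y ∈ K n) (hv : ‖v‖ = 1) :
    (fun i => ⟪v, Y i v⟫ • (1 : 𝓗 1 →L[ℂ] 𝓗 1)) ∈ K 1 := by
  simpa only [Fin.sum_univ_one, adjoint_rankOne_comp_comp_rankOne,
    EuclideanSpace.rankOne_single_zero_eq_one] using
    hK 1 1 (fun _ => n) (fun _ => Y) _ (fun _ => hY) (sum_adjoint_rankOne_comp_rankOne hv)

theorem IsMatrixAffineOn.apply_compress (hθ : IsMatrixAffineOn K θ) (hY : Y ∈ K n)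
    (hv : ‖v‖ = 1) : θ 1 (fun i => ⟪v, Y i v⟫ • 1) = ⟪v, θ n Y v⟫ • 1 := by
  simpa only [Fin.sum_univ_one, adjoint_rankOne_comp_comp_rankOne,
    EuclideanSpace.rankOne_single_zero_eq_one] using
    hθ 1 1 (fun _ => n) (fun _ => Y) _ (fun _ => hY) (sum_adjoint_rankOne_comp_rankOne hv)

theorem IsMatrixConvex.convex (hK : IsMatrixConvex K) (n : ℕ) : Convex ℝ (K n) := by
  intro Y hY Z hZ a b ha hb hab
  have hmem := hK n 2 (fun _ => n) ![Y, Z] _ (Fin.forall_fin_two.2 ⟨hY, hZ⟩)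
    (sum_adjoint_sqrt_smul_one_comp_eq_one ha hb hab)
  simp only [sum_adjoint_sqrt_smul_one_comp_comp ha hb] at hmem
  exact hmem

theorem IsMatrixAffineOn.affineOn (hθ : IsMatrixAffineOn K θ) (n : ℕ) :
    AffineOn ℝ (K n) (θ n) := by
  intro Y hY Z hZ a b ha hb hab
  have h := hθ n 2 (fun _ => n) ![Y, Z] _ (Fin.forall_fin_two.2 ⟨hY, hZ⟩)
    (sum_adjoint_sqrt_smul_one_comp_eq_one ha hb hab)
  simp only [sum_adjoint_sqrt_smul_one_comp_comp ha hb] at h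
  exact h

end MatrixConvex

theorem matrix_affine_maps_are_pencils_general {g : ℕ}
    (K : ∀ n : ℕ, Set (Fin g → (EuclideanSpace ℂ (Fin n) →L[ℂ] EuclideanSpace ℂ (Fin n))))
    (hsa : ∀ n, ∀ Y ∈ K n, ∀ i, IsSelfAdjoint (Y i))
    (h0 : ∀ n, (fun _ => (0 : EuclideanSpace ℂ (Fin n) →L[ℂ] EuclideanSpace ℂ (Fin n))) ∈ K n)
    (hconv : ∀ (n k : ℕ) (nn : Fin k → ℕ)
      (Z : ∀ ℓ : Fin k, Fin g →
        (EuclideanSpace ℂ (Fin (nn ℓ)) →L[ℂ] EuclideanSpace ℂ (Fin (nn ℓ))))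
      (V : ∀ ℓ : Fin k, EuclideanSpace ℂ (Fin n) →L[ℂ] EuclideanSpace ℂ (Fin (nn ℓ))),
      (∀ ℓ, Z ℓ ∈ K (nn ℓ)) →
      (∑ ℓ, (ContinuousLinearMap.adjoint (V ℓ)).comp (V ℓ)) = 1 →
      (fun i => ∑ ℓ, (ContinuousLinearMap.adjoint (V ℓ)).comp (((Z ℓ) i).comp (V ℓ))) ∈ K n)
    (θ : ∀ n : ℕ, (Fin g → (EuclideanSpace ℂ (Fin n) →L[ℂ] EuclideanSpace ℂ (Fin n))) →
      (EuclideanSpace ℂ (Fin n) →L[ℂ] EuclideanSpace ℂ (Fin n)))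
    (hθsa : ∀ n, ∀ Y ∈ K n, IsSelfAdjoint (θ n Y))
    (hθaff : ∀ (n k : ℕ) (nn : Fin k → ℕ)
      (Z : ∀ ℓ : Fin k, Fin g →
        (EuclideanSpace ℂ (Fin (nn ℓ)) →L[ℂ] EuclideanSpace ℂ (Fin (nn ℓ))))
      (V : ∀ ℓ : Fin k, EuclideanSpace ℂ (Fin n) →L[ℂ] EuclideanSpace ℂ (Fin (nn ℓ))),
      (∀ ℓ, Z ℓ ∈ K (nn ℓ)) →
      (∑ ℓ, (ContinuousLinearMap.adjoint (V ℓ)).comp (V ℓ)) = 1 →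
      θ n (fun i => ∑ ℓ, (ContinuousLinearMap.adjoint (V ℓ)).comp (((Z ℓ) i).comp (V ℓ))) =
        ∑ ℓ, (ContinuousLinearMap.adjoint (V ℓ)).comp ((θ (nn ℓ) (Z ℓ)).comp (V ℓ))) :
    ∃ (α₀ : ℝ) (α : Fin g → ℝ), ∀ n, ∀ Y ∈ K n,
      θ n Y = (α₀ : ℂ) • (1 : EuclideanSpace ℂ (Fin n) →L[ℂ] EuclideanSpace ℂ (Fin n)) -
        ∑ i, (α i : ℂ) • Y i := by
  obtain ⟨L, hL⟩ := (IsMatrixAffineOn.affineOn hθaff 1).exists_linearMap_eq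
    (IsMatrixConvex.convex hconv 1) (h0 1)
  set a : (𝓗 1 →L[ℂ] 𝓗 1) → ℝ := fun T => RCLike.re ⟪e₁, T e₁⟫
  refine ⟨a (θ 1 0), fun i => -a (L (Pi.single i 1)),
    fun n Y hY => ext_inner_self_of_norm_eq_one fun v hv => ?_⟩
  set r : Fin g → ℝ := fun i => RCLike.re ⟪v, Y i v⟫
  have hr : ∀ i, ⟪v, Y i v⟫ = r i := fun i => ((hsa n Y hY i).coe_re_inner_self_apply v).symm
  have hc : (fun i => ⟪v, Y i v⟫ • (1 : 𝓗 1 →L[ℂ] 𝓗 1)) = ∑ i, r i • Pi.single i 1 := by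
    simp_rw [← Pi.single_smul, Finset.univ_sum_single (fun i => r i • (1 : 𝓗 1 →L[ℂ] 𝓗 1)), hr]
    norm_cast
  have key := IsMatrixAffineOn.apply_compress hθaff hY hv
  rw [hL _ (IsMatrixConvex.compress_mem hconv hY hv), hc, map_sum] at key
  have hre : RCLike.re ⟪v, θ n Y v⟫ = a (θ 1 0) + ∑ i, r i * a (L (Pi.single i 1)) := by
    simpa [a] using (congrArg a key).symm
  rw [← (hθsa n Y hY).coe_re_inner_self_apply, hre]
  simp [inner_self_eq_norm_sq_to_K, hv, hr, mul_comm]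

/-- Proposition 3.1: a self-adjoint matrix affine map `θ` on a closed
bounded matrix convex set `K` (of self-adjoint tuples) containing `0` is a (monic-type)
linear pencil: there are reals `α₀, α₁, …, α_g` with
`θ_n(Y) = α₀ I − Σ α_i Y_i` on all of `K`. -/
theorem matrix_affine_maps_are_pencils {g : ℕ}
    (K : ∀ n : ℕ, Set (Fin g → (EuclideanSpace ℂ (Fin n) →L[ℂ] EuclideanSpace ℂ (Fin n))))
    (hsa : ∀ n, ∀ Y ∈ K n, ∀ i, IsSelfAdjoint (Y i))
    (hclosed : ∀ n, IsClosed (K n))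
    (hbdd : ∃ C : ℝ, ∀ n, ∀ Y ∈ K n, ∀ i, ‖Y i‖ ≤ C)
    (h0 : ∀ n, (fun _ => (0 : EuclideanSpace ℂ (Fin n) →L[ℂ] EuclideanSpace ℂ (Fin n))) ∈ K n)
    (hconv : ∀ (n k : ℕ) (nn : Fin k → ℕ)
      (Z : ∀ ℓ : Fin k, Fin g →
        (EuclideanSpace ℂ (Fin (nn ℓ)) →L[ℂ] EuclideanSpace ℂ (Fin (nn ℓ))))
      (V : ∀ ℓ : Fin k, EuclideanSpace ℂ (Fin n) →L[ℂ] EuclideanSpace ℂ (Fin (nn ℓ))),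
      (∀ ℓ, Z ℓ ∈ K (nn ℓ)) →
      (∑ ℓ, (ContinuousLinearMap.adjoint (V ℓ)).comp (V ℓ)) = 1 →
      (fun i => ∑ ℓ, (ContinuousLinearMap.adjoint (V ℓ)).comp (((Z ℓ) i).comp (V ℓ))) ∈ K n)
    (θ : ∀ n : ℕ, (Fin g → (EuclideanSpace ℂ (Fin n) →L[ℂ] EuclideanSpace ℂ (Fin n))) →
      (EuclideanSpace ℂ (Fin n) →L[ℂ] EuclideanSpace ℂ (Fin n)))
    (hθsa : ∀ n, ∀ Y ∈ K n, IsSelfAdjoint (θ n Y))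
    (hθaff : ∀ (n k : ℕ) (nn : Fin k → ℕ)
      (Z : ∀ ℓ : Fin k, Fin g →
        (EuclideanSpace ℂ (Fin (nn ℓ)) →L[ℂ] EuclideanSpace ℂ (Fin (nn ℓ))))
      (V : ∀ ℓ : Fin k, EuclideanSpace ℂ (Fin n) →L[ℂ] EuclideanSpace ℂ (Fin (nn ℓ))),
      (∀ ℓ, Z ℓ ∈ K (nn ℓ)) →
      (∑ ℓ, (ContinuousLinearMap.adjoint (V ℓ)).comp (V ℓ)) = 1 →
      θ n (fun i => ∑ ℓ, (ContinuousLinearMap.adjoint (V ℓ)).comp (((Z ℓ) i).comp (V ℓ))) =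
        ∑ ℓ, (ContinuousLinearMap.adjoint (V ℓ)).comp ((θ (nn ℓ) (Z ℓ)).comp (V ℓ))) :
    ∃ (α₀ : ℝ) (α : Fin g → ℝ), ∀ n, ∀ Y ∈ K n,
      θ n Y = (α₀ : ℂ) • (1 : EuclideanSpace ℂ (Fin n) →L[ℂ] EuclideanSpace ℂ (Fin n)) -
        ∑ i, (α i : ℂ) • Y i :=
  matrix_affine_maps_are_pencils_general K hsa h0 hconv θ hθsa hθaff
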